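/- Let I = (𝔼, D, c, f) be a CMP instance whose objective f is of type sum. Then for every e ∈ 𝔼 it holds that l'(I,e) = f(D+(e)) − f(I), where the right-hand side is ∞ when D+(e) = ∅. -/

import Mathlib

open scoped ENNReal BigOperators

/-- Objective type of a combinatorial minimization problem:
sum, product, or bottleneck. -/
inductive ObjType where
  | sum : ObjType
  | prod : ObjType
  | bottleneck : ObjType
deriving DecidableEq

/-- The cost `f_c(S)` of a feasible solution `S` under cost function `c`:
the sum, the product, or the maximum (for nonempty `S`) of the element costs. -/
noncomputable def objCost {ι : Type*} (t : ObjType) (c : ι → ℝ) (S : Finset ι) : ℝ :=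
  match t with
  | ObjType.sum => ∑ e ∈ S, c e
  | ObjType.prod => ∏ e ∈ S, c e
  | ObjType.bottleneck => if h : S.Nonempty then S.sup' h c else 0

/-- The optimal objective value `f(I)` of the instance with feasible set `D`. -/
noncomputable def optVal {ι : Type*} (t : ObjType) (c : ι → ℝ) (D : Finset (Finset ι)) : ℝ :=
  if h : D.Nonempty then D.inf' h (objCost t c) else 0

/-- `S` is an optimal solution of the instance `(𝔼, D, c, f)`. -/
def isOpt {ι : Type*} (t : ObjType) (c : ι → ℝ) (D : Finset (Finset ι)) (S : Finset ι) : Prop :=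
  S ∈ D ∧ objCost t c S = optVal t c D

/-- `0 ≤ a < maxdec(e)`, where `maxdec(e) = ∞` for sum/bottleneck objectives and
`maxdec(e) = c(e)` for the product objective. -/
def decOK {ι : Type*} (t : ObjType) (c : ι → ℝ) (e : ι) (a : ℝ) : Prop :=
  0 ≤ a ∧ (t = ObjType.prod → a < c e)

/-- Extended single upper tolerance
`u'(I,e) = sup {α ≥ 0 : every optimal solution of I is optimal for I_{α,e}}` valued in `[0,∞]`. -/
noncomputable def uTol {ι : Type*} [DecidableEq ι] (t : ObjType) (c : ι → ℝ)
    (D : Finset (Finset ι)) (e : ι) : ℝ≥0∞ :=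
  sSup (ENNReal.ofReal '' {a : ℝ | 0 ≤ a ∧
    ∀ S : Finset ι, isOpt t c D S →
      isOpt t (fun x => if x = e then c x + a else c x) D S})

/-- Extended regular set upper tolerance `u'(I,E)`, valued in `[0,∞]`. -/
noncomputable def uTolSet {ι : Type*} [DecidableEq ι] (t : ObjType) (c : ι → ℝ)
    (D : Finset (Finset ι)) (E : Finset ι) : ℝ≥0∞ :=
  sSup (ENNReal.ofReal '' {a : ℝ |
    ∀ S : Finset ι, isOpt t c D S →
      ∃ α : ι → ℝ, (∀ x, 0 ≤ α x) ∧ (∀ x ∉ E, α x = 0) ∧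
        a = ∑ x ∈ E, α x ∧ isOpt t (fun x => c x + α x) D S})

/-- Extended reverse set upper tolerance `u_b'(I,E)`, valued in `[0,∞]` (`inf ∅ = ∞`). -/
noncomputable def uTolSetRev {ι : Type*} [DecidableEq ι] (t : ObjType) (c : ι → ℝ)
    (D : Finset (Finset ι)) (E : Finset ι) : ℝ≥0∞ :=
  sInf (ENNReal.ofReal '' {a : ℝ |
    ∃ S : Finset ι, isOpt t c D S ∧
      ∃ α : ι → ℝ, (∀ x, 0 ≤ α x) ∧ (∀ x ∉ E, α x = 0) ∧
        a = ∑ x ∈ E, α x ∧ ¬ isOpt t (fun x => c x + α x) D S})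

/-- New single lower tolerance
`l'(I,e) = sup {α : 0 ≤ α < maxdec(e), f(I_{−α,e}) = f(I)}`, valued in `[0,∞]`. -/
noncomputable def lTol {ι : Type*} [DecidableEq ι] (t : ObjType) (c : ι → ℝ)
    (D : Finset (Finset ι)) (e : ι) : ℝ≥0∞ :=
  sSup (ENNReal.ofReal '' {a : ℝ | decOK t c e a ∧
    optVal t (fun x => if x = e then c x - a else c x) D = optVal t c D})

/-- New regular set lower tolerance `l'(I,E)`, valued in `[0,∞]`. -/
noncomputable def lTolSet {ι : Type*} [DecidableEq ι] (t : ObjType) (c : ι → ℝ)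
    (D : Finset (Finset ι)) (E : Finset ι) : ℝ≥0∞ :=
  sSup (ENNReal.ofReal '' {a : ℝ |
    ∃ α : ι → ℝ, (∀ x ∈ E, decOK t c x (α x)) ∧ (∀ x ∉ E, α x = 0) ∧
      a = ∑ x ∈ E, α x ∧ optVal t (fun x => c x - α x) D = optVal t c D})

/-- New reverse set lower tolerance `l_b'(I,E)`, valued in `[0,∞]` (`inf ∅ = ∞`). -/
noncomputable def lTolSetRev {ι : Type*} [DecidableEq ι] (t : ObjType) (c : ι → ℝ)
    (D : Finset (Finset ι)) (E : Finset ι) : ℝ≥0∞ :=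
  sInf (ENNReal.ofReal '' {a : ℝ |
    ∃ α : ι → ℝ, (∀ x ∈ E, decOK t c x (α x)) ∧ (∀ x ∉ E, α x = 0) ∧
      a = ∑ x ∈ E, α x ∧ optVal t (fun x => c x - α x) D < optVal t c D})

/-! For a sum objective, lowering `c e` by `a ≥ 0` lowers the cost of exactly the solutions through
`e` by `a` and leaves the others unchanged. Hence the optimum stays put iff every solution through
`e` still costs at least `f(I)`, i.e. iff `a ≤ f(D⁺(e)) − f(I)`; when no solution contains `e`,
every `a ≥ 0` qualifies. The tolerance is the supremum of this interval. -/

open Finset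

section

variable {ι : Type*}

theorem optVal_le_objCost {t : ObjType} {c : ι → ℝ} {D : Finset (Finset ι)} {S : Finset ι}
    (hS : S ∈ D) : optVal t c D ≤ objCost t c S := by
  rw [optVal, dif_pos ⟨S, hS⟩]
  exact inf'_le _ hS

theorem le_optVal_iff {t : ObjType} {c : ι → ℝ} {D : Finset (Finset ι)} (hD : D.Nonempty)
    {b : ℝ} : b ≤ optVal t c D ↔ ∀ S ∈ D, b ≤ objCost t c S := by
  rw [optVal, dif_pos hD, le_inf'_iff]

theorem objCost_sum_sub_single [DecidableEq ι] (c : ι → ℝ) (e : ι) (a : ℝ) (S : Finset ι) :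
    objCost ObjType.sum (fun x => if x = e then c x - a else c x) S
      = objCost ObjType.sum c S - if e ∈ S then a else 0 := by
  simp only [objCost, ← sum_ite_eq' S e fun _ => a, ← sum_sub_distrib]
  exact sum_congr rfl fun x _ => by split_ifs <;> ring

theorem optVal_sum_sub_single_eq_iff [DecidableEq ι] {c : ι → ℝ} {D : Finset (Finset ι)}
    {e : ι} {a : ℝ} (ha : 0 ≤ a) :
    optVal ObjType.sum (fun x => if x = e then c x - a else c x) D = optVal ObjType.sum c D ↔
      ∀ S ∈ D, e ∈ S → optVal ObjType.sum c D + a ≤ objCost ObjType.sum c S := by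
  rcases D.eq_empty_or_nonempty with rfl | hD
  · simp [optVal]
  have hle : optVal ObjType.sum (fun x => if x = e then c x - a else c x) D ≤
      optVal ObjType.sum c D := by
    refine (le_optVal_iff hD).2 fun S hS => (optVal_le_objCost hS).trans ?_
    rw [objCost_sum_sub_single]
    split_ifs <;> linarith
  rw [← hle.ge_iff_eq, le_optVal_iff hD]
  refine forall₂_congr fun S hS => ?_
  rw [objCost_sum_sub_single]
  by_cases heS : e ∈ S
  · simp only [heS, if_true, true_imp_iff]
    constructor <;> intro h <;> linarith
  · simpa [heS] using optVal_le_objCost hS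

end

theorem ofReal_le_dite_inf'_sub_iff {α : Type*} {F : Finset α} {g : α → ℝ} {m a : ℝ}
    (hm : ∀ x ∈ F, m ≤ g x) :
    ENNReal.ofReal a ≤ (if h : F.Nonempty then ENNReal.ofReal (F.inf' h g - m) else ⊤) ↔
      ∀ x ∈ F, m + a ≤ g x := by
  split_ifs with h
  · obtain ⟨x, hx, hgx⟩ := exists_mem_eq_inf' h g
    rw [ENNReal.ofReal_le_ofReal_iff (sub_nonneg.2 (hgx ▸ hm x hx)), le_sub_iff_add_le',
      le_inf'_iff]
  · simp [not_nonempty_iff_eq_empty.1 h]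

theorem sSup_ofReal_image_setOf_le (r : ℝ≥0∞) :
    sSup (ENNReal.ofReal '' {a | 0 ≤ a ∧ ENNReal.ofReal a ≤ r}) = r := by
  refine le_antisymm (sSup_le ?_) (ENNReal.le_of_forall_nnreal_lt fun q hq => le_sSup ?_)
  · rintro _ ⟨a, ⟨-, har⟩, rfl⟩
    exact har
  · exact ⟨q, ⟨q.2, ENNReal.ofReal_coe_nnreal.trans_le hq.le⟩, ENNReal.ofReal_coe_nnreal⟩

theorem lsi_formula_sum_general {ι : Type*} [DecidableEq ι]
    (c : ι → ℝ) (D : Finset (Finset ι)) :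
    ∀ e : ι, lTol ObjType.sum c D e =
      if h : (D.filter fun S => e ∈ S).Nonempty then
        ENNReal.ofReal
          ((D.filter fun S => e ∈ S).inf' h (objCost ObjType.sum c)
            - optVal ObjType.sum c D)
      else ⊤ := by
  intro e
  refine (congrArg sSup ?_).trans (sSup_ofReal_image_setOf_le _)
  congr 1
  ext a
  simp only [Set.mem_ofPred_eq, decOK, reduceCtorEq, false_imp_iff, and_true]
  refine and_congr_right fun ha => ?_
  rw [optVal_sum_sub_single_eq_iff ha,
    ofReal_le_dite_inf'_sub_iff (fun S hS => optVal_le_objCost (mem_filter.1 hS).1)]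
  simp only [mem_filter, and_imp]

/-- Theorem 5(b): for a sum objective,
`l'(I,e) = f(D⁺(e)) − f(I)`, where the right-hand side is `∞` if `D⁺(e) = ∅`. -/
theorem lsi_formula_sum {ι : Type*} [Fintype ι] [DecidableEq ι]
    (c : ι → ℝ) (D : Finset (Finset ι))
    (hD : D.Nonempty) (hSne : ∀ S ∈ D, S.Nonempty) :
    ∀ e : ι, lTol ObjType.sum c D e =
      if h : (D.filter fun S => e ∈ S).Nonempty then
        ENNReal.ofReal
          ((D.filter fun S => e ∈ S).inf' h (objCost ObjType.sum c)
            - optVal ObjType.sum c D)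
      else ⊤ :=
  lsi_formula_sum_general c D
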